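/- arXiv:2505.00567 — 4 statements merged into one kernel-verified Lean document; each statement's English description precedes it below -/
import Mathlib

section
/- Ahlswede's covering lemma (Lemma 2): Let X be a finite alphabet, n ∈ ℕ, Q an n-type on X, and A a nonempty subset of the type class T_n(Q). If k ∈ ℕ satisfies k > |A|⁻¹ · |T_n(Q)| · log|T_n(Q)|, then there exist permutations π_1, …, π_k of {1,…,n} such that ⋃_{i=1}^{k} π_i[A] = T_n(Q). -/
open scoped BigOperators Classical

noncomputable section

/-- A probability mass function on a finite alphabet. -/
def IsPMF {X : Type*} [Fintype X] (p : X → ℝ) : Prop :=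
  (∀ a, 0 ≤ p a) ∧ ∑ a, p a = 1

/-- A (discrete memoryless) channel from `X` to `Y`: every row is a pmf. -/
def IsChannel {X Y : Type*} [Fintype X] [Fintype Y] (W : X → Y → ℝ) : Prop :=
  ∀ x, IsPMF (W x)

/-- Empirical distribution (type) of a sequence `x : Fin n → X`. -/
def empDist {X : Type*} [Fintype X] {n : ℕ} (x : Fin n → X) (a : X) : ℝ :=
  ((Finset.univ.filter fun t => x t = a).card : ℝ) / n

/-- `P` is an `n`-type on `X`: a pmf all of whose masses are multiples of `1/n`. -/
def IsNType {X : Type*} [Fintype X] (n : ℕ) (P : X → ℝ) : Prop :=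
  IsPMF P ∧ ∀ a, ∃ k : ℕ, (n : ℝ) * P a = k

/-- The type class `T_n(P)`: all sequences with empirical distribution `P`. -/
def typeClass {X : Type*} [Fintype X] (n : ℕ) (P : X → ℝ) : Finset (Fin n → X) :=
  Finset.univ.filter fun x => empDist x = P

/-- Shannon entropy (natural logarithm). -/
def shEntropy {X : Type*} [Fintype X] (p : X → ℝ) : ℝ :=
  ∑ a, Real.negMulLog (p a)

/-- Kullback–Leibler divergence (real-valued, with the usual `log` conventions). -/
def dKL {X : Type*} [Fintype X] (q p : X → ℝ) : ℝ :=
  ∑ a, q a * Real.log (q a / p a)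

/-- Conditional KL divergence `D(V‖W|P)`. -/
def condDKL {X Y : Type*} [Fintype X] [Fintype Y] (V W : X → Y → ℝ) (P : X → ℝ) : ℝ :=
  ∑ x, P x * dKL (V x) (W x)

def margFst {X Y : Type*} [Fintype X] [Fintype Y] (Q : X × Y → ℝ) (x : X) : ℝ :=
  ∑ y, Q (x, y)

def margSnd {X Y : Type*} [Fintype X] [Fintype Y] (Q : X × Y → ℝ) (y : Y) : ℝ :=
  ∑ x, Q (x, y)

/-- Mutual information of a joint pmf (natural logarithm). -/
def mutualInfo {X Y : Type*} [Fintype X] [Fintype Y] (Q : X × Y → ℝ) : ℝ :=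
  ∑ x, ∑ y, Q (x, y) * Real.log (Q (x, y) / (margFst Q x * margSnd Q y))

/-- Mutual information `I(P, V)` of the joint pmf `P(x)·V(y|x)`. -/
def miPV {X Y : Type*} [Fintype X] [Fintype Y] (P : X → ℝ) (V : X → Y → ℝ) : ℝ :=
  mutualInfo fun p => P p.1 * V p.1 p.2

/-- Positive part `|a|⁺ = max (a, 0)`. -/
def plusPart (a : ℝ) : ℝ := max a 0

def margXY {X Y U : Type*} [Fintype X] [Fintype Y] [Fintype U] (Q : X × Y × U → ℝ) :
    X × Y → ℝ := fun p => ∑ u, Q (p.1, p.2, u)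

def margYU {X Y U : Type*} [Fintype X] [Fintype Y] [Fintype U] (Q : X × Y × U → ℝ) :
    Y × U → ℝ := fun p => ∑ x, Q (x, p.1, p.2)

def margXU {X Y U : Type*} [Fintype X] [Fintype Y] [Fintype U] (Q : X × Y × U → ℝ) :
    X × U → ℝ := fun p => ∑ y, Q (p.1, y, p.2)

def margX3 {X Y U : Type*} [Fintype X] [Fintype Y] [Fintype U] (Q : X × Y × U → ℝ)
    (x : X) : ℝ := ∑ y, ∑ u, Q (x, y, u)

def margY3 {X Y U : Type*} [Fintype X] [Fintype Y] [Fintype U] (Q : X × Y × U → ℝ)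
    (y : Y) : ℝ := ∑ x, ∑ u, Q (x, y, u)

/-- Conditional mutual information `I_Q(X;U|Y)` of a joint pmf `Q` on `X × Y × U`. -/
def condMI3 {X Y U : Type*} [Fintype X] [Fintype Y] [Fintype U] (Q : X × Y × U → ℝ) : ℝ :=
  ∑ x, ∑ y, ∑ u, Q (x, y, u) *
    Real.log (Q (x, y, u) * margY3 Q y / (margXY Q (x, y) * margYU Q (y, u)))

/-- `D(Q_{Y|X} ‖ W | P)` written via the joint pmf `Q_{XY}` (whose `X`-marginal is `P`). -/
def condDKLJoint {X Y : Type*} [Fintype X] [Fintype Y] (QXY : X × Y → ℝ)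
    (W : X → Y → ℝ) (P : X → ℝ) : ℝ :=
  ∑ x, ∑ y, QXY (x, y) * Real.log (QXY (x, y) / (P x * W x y))

/-- Number of messages `M_n = ⌈exp (n R)⌉`. -/
def Mn (R : ℝ) (n : ℕ) : ℕ := ⌈Real.exp (n * R)⌉₊

/-- All codebooks of `M` codewords, each of constant composition `P`. -/
def ccCodebooks {X : Type*} [Fintype X] (n M : ℕ) (P : X → ℝ) :
    Finset (Fin M → Fin n → X) :=
  Finset.univ.filter fun C => ∀ m, C m ∈ typeClass n P

/-- Ensemble-average decoding error probability of an `(n,R,B)`-code for the IB channel: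
the expectation, over a codebook drawn uniformly from the constant composition ensemble of
type `P`, of the average over messages `m` of the probability (under the memoryless channel
`W`) that the decoder output differs from `m` when codeword `C m` is sent. -/
def avgError {X Y L : Type*} [Fintype X] [Fintype Y] (W : X → Y → ℝ) (n M : ℕ)
    (P : X → ℝ) (φ : (Fin n → Y) → L) (ψ : L → (Fin M → Fin n → X) → Fin M) : ℝ :=
  (∑ C ∈ ccCodebooks n M P, (M : ℝ)⁻¹ * ∑ m : Fin M, ∑ y : Fin n → Y,
      if ψ (φ y) C = m then 0 else ∏ t, W (C m t) (y t)) /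
    ((ccCodebooks n M P).card : ℝ)


section Aux
variable {X : Type*} [Fintype X] {n : ℕ}

lemma typeClass_comp_perm (Q : X → ℝ) {x : Fin n → X} (hx : x ∈ typeClass n Q)
    (π : Equiv.Perm (Fin n)) : x ∘ ⇑π ∈ typeClass n Q := by
  simp only [typeClass, Finset.mem_filter, Finset.mem_univ, true_and] at hx ⊢
  rw [← hx]
  funext a
  unfold empDist
  congr 1
  norm_cast
  apply Finset.card_bij' (fun t _ => π t) (fun s _ => π.symm s) <;>
    simp [Function.comp]

lemma typeClass_trans (Q : X → ℝ) {x y : Fin n → X} (hx : x ∈ typeClass n Q)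
    (hy : y ∈ typeClass n Q) : ∃ π : Equiv.Perm (Fin n), x ∘ ⇑π = y := by
  rcases Nat.eq_zero_or_pos n with hn | hn
  · subst hn
    exact ⟨1, funext fun t => absurd t.2 (by omega)⟩
  simp only [typeClass, Finset.mem_filter, Finset.mem_univ, true_and] at hx hy
  have hcard : ∀ a : X, (Finset.univ.filter fun t => y t = a).card =
      (Finset.univ.filter fun t => x t = a).card := by
    intro a
    have := congrFun hx a
    rw [← congrFun hy a] at this
    unfold empDist at this
    have hn' : (n : ℝ) ≠ 0 := Nat.cast_ne_zero.2 hn.ne'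
    field_simp at this
    exact_mod_cast this.symm
  have e : ∀ a : X, { t // y t = a } ≃ { t // x t = a } := by
    intro a
    apply Fintype.equivOfCardEq
    rw [Fintype.card_subtype, Fintype.card_subtype]
    exact hcard a
  refine ⟨Equiv.ofFiberEquiv e, funext fun t => ?_⟩
  exact Equiv.ofFiberEquiv_map e t

/-- number of permutations carrying `y` to `x` -/
def permCount (y x : Fin n → X) : ℕ :=
  (Finset.univ.filter fun π : Equiv.Perm (Fin n) => y ∘ ⇑π = x).card

lemma permCount_congr (Q : X → ℝ) (y : Fin n → X) {x x' : Fin n → X}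
    (hx : x ∈ typeClass n Q) (hx' : x' ∈ typeClass n Q) :
    permCount y x = permCount y x' := by
  obtain ⟨σ, hσ⟩ := typeClass_trans Q hx hx'
  unfold permCount
  apply Finset.card_bij' (fun π _ => σ.trans π) (fun π _ => σ.symm.trans π)
  · intro π hπ
    simp only [Finset.mem_filter, Finset.mem_univ, true_and] at hπ ⊢
    rw [Equiv.coe_trans, ← Function.comp_assoc, hπ, hσ]
  · intro π hπ
    simp only [Finset.mem_filter, Finset.mem_univ, true_and] at hπ ⊢
    rw [Equiv.coe_trans, ← Function.comp_assoc, hπ, ← hσ]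
    funext t; simp
  · intro π _; ext t; simp
  · intro π _; ext t; simp

lemma permCount_sum (Q : X → ℝ) {y : Fin n → X} (hy : y ∈ typeClass n Q) :
    ∑ x ∈ typeClass n Q, permCount y x = Fintype.card (Equiv.Perm (Fin n)) := by
  rw [← Finset.card_univ]
  exact (Finset.card_eq_sum_card_fiberwise
    (fun π _ => typeClass_comp_perm Q hy π)).symm

lemma permCount_mul (Q : X → ℝ) {y x : Fin n → X} (hy : y ∈ typeClass n Q)
    (hx : x ∈ typeClass n Q) :
    (typeClass n Q).card * permCount y x = Fintype.card (Equiv.Perm (Fin n)) := by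
  rw [← permCount_sum Q hy, Finset.sum_congr rfl
    (fun x' hx' => permCount_congr Q y hx' hx), Finset.sum_const, smul_eq_mul]

lemma exists_good_perm (Q : X → ℝ) (A R : Finset (Fin n → X))
    (hA : A ⊆ typeClass n Q) (hR : R ⊆ typeClass n Q) (hne : A.Nonempty) :
    ∃ π : Equiv.Perm (Fin n),
      R.card * A.card ≤ (typeClass n Q).card * (R.filter fun y => y ∘ ⇑π ∈ A).card := by
  obtain ⟨x₀, hx₀⟩ := hne
  set T := typeClass n Q with hT
  have h_fubini : ∑ π : Equiv.Perm (Fin n), (R.filter fun y => y ∘ ⇑π ∈ A).card =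
      ∑ y ∈ R, (Finset.univ.filter fun π : Equiv.Perm (Fin n) => y ∘ ⇑π ∈ A).card := by
    simp only [Finset.card_filter]
    exact Finset.sum_comm
  have h_inner : ∀ y ∈ R,
      (Finset.univ.filter fun π : Equiv.Perm (Fin n) => y ∘ ⇑π ∈ A).card =
        ∑ x ∈ A, permCount y x := by
    intro y _
    have h1 := Finset.card_eq_sum_card_fiberwise
      (f := fun π : Equiv.Perm (Fin n) => y ∘ ⇑π)
      (s := Finset.univ.filter fun π : Equiv.Perm (Fin n) => y ∘ ⇑π ∈ A) (t := A)
      (fun π hπ => (Finset.mem_filter.1 hπ).2)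
    rw [h1]
    refine Finset.sum_congr rfl fun x hx => ?_
    unfold permCount
    congr 1
    rw [Finset.filter_filter]
    ext π
    simp only [Finset.mem_filter, Finset.mem_univ, true_and]
    exact ⟨fun h => h.2, fun h => ⟨h ▸ hx, h⟩⟩
  have h_const : ∀ y ∈ R, ∑ x ∈ A, permCount y x = A.card * permCount y x₀ := by
    intro y _
    rw [Finset.sum_congr rfl fun x hx => permCount_congr Q y (hA hx) (hA hx₀),
      Finset.sum_const, smul_eq_mul]
  have h_orbit : ∀ y ∈ R, T.card * permCount y x₀ = Fintype.card (Equiv.Perm (Fin n)) :=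
    fun y hy => permCount_mul Q (hR hy) (hA hx₀)
  have key : ∑ π : Equiv.Perm (Fin n), R.card * A.card ≤
      ∑ π : Equiv.Perm (Fin n), T.card * (R.filter fun y => y ∘ ⇑π ∈ A).card := by
    have : ∑ π : Equiv.Perm (Fin n), T.card * (R.filter fun y => y ∘ ⇑π ∈ A).card
        = ∑ y ∈ R, A.card * (T.card * permCount y x₀) := by
      rw [← Finset.mul_sum, h_fubini,
        Finset.sum_congr rfl h_inner, Finset.sum_congr rfl h_const, Finset.mul_sum]
      exact Finset.sum_congr rfl fun y _ => by ring
    rw [this]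
    have h2 : ∑ y ∈ R, A.card * (T.card * permCount y x₀)
        = R.card * (A.card * Fintype.card (Equiv.Perm (Fin n))) :=
      calc ∑ y ∈ R, A.card * (T.card * permCount y x₀)
          = ∑ y ∈ R, A.card * Fintype.card (Equiv.Perm (Fin n)) :=
            Finset.sum_congr rfl fun y hy => by rw [h_orbit y hy]
        _ = _ := by rw [Finset.sum_const, smul_eq_mul]
    rw [h2]
    apply le_of_eq
    rw [Finset.sum_const, smul_eq_mul, Finset.card_univ]
    ring
  obtain ⟨π, _, hπ⟩ := Finset.exists_le_of_sum_le Finset.univ_nonempty key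
  exact ⟨π, hπ⟩

lemma exists_good_perm' (Q : X → ℝ) (A R : Finset (Fin n → X)) :
    ∃ π : Equiv.Perm (Fin n), A ⊆ typeClass n Q → R ⊆ typeClass n Q → A.Nonempty →
      R.card * A.card ≤ (typeClass n Q).card * (R.filter fun y => y ∘ ⇑π ∈ A).card := by
  by_cases h : A ⊆ typeClass n Q ∧ R ⊆ typeClass n Q ∧ A.Nonempty
  · obtain ⟨π, hπ⟩ := exists_good_perm Q A R h.1 h.2.1 h.2.2
    exact ⟨π, fun _ _ _ => hπ⟩
  · exact ⟨1, fun h1 h2 h3 => absurd ⟨h1, h2, h3⟩ h⟩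

def goodPerm (Q : X → ℝ) (A R : Finset (Fin n → X)) : Equiv.Perm (Fin n) :=
  Classical.choose (exists_good_perm' Q A R)

lemma goodPerm_spec (Q : X → ℝ) (A R : Finset (Fin n → X))
    (hA : A ⊆ typeClass n Q) (hR : R ⊆ typeClass n Q) (hne : A.Nonempty) :
    R.card * A.card ≤
      (typeClass n Q).card * (R.filter fun y => y ∘ ⇑(goodPerm Q A R) ∈ A).card :=
  Classical.choose_spec (exists_good_perm' Q A R) hA hR hne

def Rseq (Q : X → ℝ) (A : Finset (Fin n → X)) : ℕ → Finset (Fin n → X)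
  | 0 => typeClass n Q
  | (i+1) => (Rseq Q A i).filter fun y => y ∘ ⇑(goodPerm Q A (Rseq Q A i)) ∉ A

lemma Rseq_subset (Q : X → ℝ) (A : Finset (Fin n → X)) :
    ∀ i, Rseq Q A i ⊆ typeClass n Q := by
  intro i
  induction i with
  | zero => exact Finset.Subset.refl _
  | succ i ih => exact (Finset.filter_subset _ _).trans ih

lemma Rseq_step (Q : X → ℝ) (A : Finset (Fin n → X))
    (hA : A ⊆ typeClass n Q) (hne : A.Nonempty) (i : ℕ) :
    (typeClass n Q).card * (Rseq Q A (i + 1)).card ≤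
      ((typeClass n Q).card - A.card) * (Rseq Q A i).card := by
  set R := Rseq Q A i with hR
  set π := goodPerm Q A R with hπ
  have hsplit : (R.filter fun y => y ∘ ⇑π ∈ A).card +
      (R.filter fun y => ¬ (y ∘ ⇑π ∈ A)).card = R.card :=
    Finset.card_filter_add_card_filter_not _
  have hspec := goodPerm_spec Q A R hA (Rseq_subset Q A i) hne
  have hsucc : Rseq Q A (i + 1) = R.filter fun y => ¬ (y ∘ ⇑π ∈ A) := rfl
  rw [hsucc, Nat.sub_mul]
  apply Nat.le_sub_of_add_le
  calc (typeClass n Q).card * (R.filter fun y => ¬ (y ∘ ⇑π ∈ A)).card + A.card * R.card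
      ≤ (typeClass n Q).card * (R.filter fun y => ¬ (y ∘ ⇑π ∈ A)).card +
        (typeClass n Q).card * (R.filter fun y => y ∘ ⇑π ∈ A).card := by
        rw [mul_comm (A.card)]
        exact Nat.add_le_add_left hspec _
    _ = (typeClass n Q).card * R.card := by rw [← Nat.mul_add, Nat.add_comm, hsplit]

lemma Rseq_bound (Q : X → ℝ) (A : Finset (Fin n → X))
    (hA : A ⊆ typeClass n Q) (hne : A.Nonempty) (i : ℕ) :
    (typeClass n Q).card ^ i * (Rseq Q A i).card ≤
      ((typeClass n Q).card - A.card) ^ i * (typeClass n Q).card := by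
  induction i with
  | zero => simp [Rseq]
  | succ i ih =>
    set N := (typeClass n Q).card
    set m := A.card
    calc N ^ (i + 1) * (Rseq Q A (i + 1)).card
        = N ^ i * (N * (Rseq Q A (i + 1)).card) := by ring
      _ ≤ N ^ i * ((N - m) * (Rseq Q A i).card) :=
          Nat.mul_le_mul_left _ (Rseq_step Q A hA hne i)
      _ = (N - m) * (N ^ i * (Rseq Q A i).card) := by ring
      _ ≤ (N - m) * ((N - m) ^ i * N) := Nat.mul_le_mul_left _ ih
      _ = (N - m) ^ (i + 1) * N := by ring

lemma Rseq_cover (Q : X → ℝ) (A : Finset (Fin n → X)) :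
    ∀ i, ∀ y ∈ typeClass n Q, y ∉ Rseq Q A i →
      ∃ j, j < i ∧ y ∘ ⇑(goodPerm Q A (Rseq Q A j)) ∈ A := by
  intro i
  induction i with
  | zero => intro y hy hy'; exact absurd hy hy'
  | succ i ih =>
    intro y hy hy'
    by_cases hmem : y ∈ Rseq Q A i
    · refine ⟨i, Nat.lt_succ_self i, ?_⟩
      by_contra hcon
      exact hy' (Finset.mem_filter.2 ⟨hmem, hcon⟩)
    · obtain ⟨j, hj, hj'⟩ := ih y hy hmem
      exact ⟨j, hj.trans (Nat.lt_succ_self i), hj'⟩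

end Aux

/-- **Lemma 2** (Ahlswede's covering lemma): if `A` is a nonempty subset of the type class
`T_n(Q)` of an `n`-type `Q` and `k > |A|⁻¹·|T_n(Q)|·log |T_n(Q)|`, then there are
permutations `π_1, …, π_k` of `{1,…,n}` whose permuted copies of `A` cover `T_n(Q)`. -/
theorem ahlswede_covering
    {X : Type*} [Fintype X] (n : ℕ) (Q : X → ℝ) (hQ : IsNType n Q)
    (A : Finset (Fin n → X)) (hA : A ⊆ typeClass n Q) (hne : A.Nonempty)
    (k : ℕ)
    (hk : ((A.card : ℝ))⁻¹ * ((typeClass n Q).card : ℝ) *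
      Real.log ((typeClass n Q).card) < k) :
    ∃ π : Fin k → Equiv.Perm (Fin n),
      (Finset.univ.biUnion fun i => A.image fun x => x ∘ (π i)) = typeClass n Q := by
  have hm : 0 < A.card := Finset.card_pos.2 hne
  have hmN : A.card ≤ (typeClass n Q).card := Finset.card_le_card hA
  have hN : 0 < (typeClass n Q).card := lt_of_lt_of_le hm hmN
  set N := (typeClass n Q).card with hNdef
  set m := A.card with hmdef
  -- the remaining set after k greedy steps is empty
  have hzero : Rseq Q A k = ∅ := by
    rw [← Finset.card_eq_zero]
    by_contra hcon
    have h1 : 1 ≤ (Rseq Q A k).card := Nat.pos_of_ne_zero hcon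
    have h2 : N ^ k ≤ (N - m) ^ k * N := by
      calc N ^ k = N ^ k * 1 := (mul_one _).symm
        _ ≤ N ^ k * (Rseq Q A k).card := Nat.mul_le_mul_left _ h1
        _ ≤ (N - m) ^ k * N := Rseq_bound Q A hA hne k
    -- pass to the reals
    have hNr : (0:ℝ) < N := Nat.cast_pos.2 hN
    have hmr : (0:ℝ) < m := Nat.cast_pos.2 hm
    have hcast : ((N - m : ℕ) : ℝ) = (N : ℝ) - m := Nat.cast_sub hmN
    have h3 : (N:ℝ) ^ k ≤ ((N:ℝ) - m) ^ k * N := by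
      rw [← hcast]; exact_mod_cast h2
    set a : ℝ := (m : ℝ) / N with hadef
    have ha0 : 0 < a := div_pos hmr hNr
    have ha1 : a ≤ 1 := by
      rw [hadef, div_le_one hNr]; exact_mod_cast hmN
    have hNm : (N:ℝ) - m = N * (1 - a) := by
      rw [hadef]; field_simp
    have h4 : 1 ≤ (1 - a) ^ k * N := by
      have hNk : (0:ℝ) < (N:ℝ) ^ k := pow_pos hNr k
      have : (N:ℝ) ^ k * 1 ≤ (N:ℝ) ^ k * ((1 - a) ^ k * N) := by
        rw [mul_one]
        calc (N:ℝ) ^ k ≤ ((N:ℝ) - m) ^ k * N := h3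
          _ = (N:ℝ) ^ k * ((1 - a) ^ k * N) := by rw [hNm, mul_pow]; ring
      exact le_of_mul_le_mul_left this hNk
    have h5 : (1 - a) ≤ Real.exp (-a) := by
      have := Real.add_one_le_exp (-a); linarith
    have h6 : 1 ≤ Real.exp (-a) ^ k * N := by
      calc (1:ℝ) ≤ (1 - a) ^ k * N := h4
        _ ≤ Real.exp (-a) ^ k * N :=
          mul_le_mul_of_nonneg_right (pow_le_pow_left₀ (by linarith) h5 k) hNr.le
    have h7 : Real.exp (-a) ^ k = Real.exp ((k : ℝ) * (-a)) := (Real.exp_nat_mul _ k).symm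
    have h8 : Real.exp ((k:ℝ) * a) ≤ N := by
      rw [h7] at h6
      have := mul_le_mul_of_nonneg_left h6 (Real.exp_pos ((k:ℝ) * a)).le
      rw [mul_one, ← mul_assoc, ← Real.exp_add] at this
      have heq : (k:ℝ) * a + (k:ℝ) * (-a) = 0 := by ring
      rw [heq, Real.exp_zero, one_mul] at this
      exact this
    have h9 : (k:ℝ) * a ≤ Real.log N := (Real.le_log_iff_exp_le hNr).2 h8
    have h10 : (k:ℝ) ≤ (m:ℝ)⁻¹ * N * Real.log N := by
      have hpos : (0:ℝ) < (m:ℝ)⁻¹ * N := mul_pos (inv_pos.2 hmr) hNr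
      calc (k:ℝ) = (m:ℝ)⁻¹ * N * ((k:ℝ) * a) := by
            rw [hadef]; field_simp
        _ ≤ (m:ℝ)⁻¹ * N * Real.log N := mul_le_mul_of_nonneg_left h9 hpos.le
    linarith
  -- conclusion
  refine ⟨fun i => (goodPerm Q A (Rseq Q A i)).symm, ?_⟩
  apply Finset.Subset.antisymm
  · intro y hy
    obtain ⟨i, _, hy'⟩ := Finset.mem_biUnion.1 hy
    obtain ⟨x, hx, rfl⟩ := Finset.mem_image.1 hy'
    exact typeClass_comp_perm Q (hA hx) _
  · intro y hy
    have hnot : y ∉ Rseq Q A k := by rw [hzero]; exact Finset.notMem_empty y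
    obtain ⟨j, hj, hjA⟩ := Rseq_cover Q A k y hy hnot
    refine Finset.mem_biUnion.2 ⟨⟨j, hj⟩, Finset.mem_univ _, Finset.mem_image.2
      ⟨y ∘ ⇑(goodPerm Q A (Rseq Q A j)), hjA, ?_⟩⟩
    funext t
    simp [Function.comp]

end
end

section
/- Simultaneous covering lemma (Lemma 3): Let X be a finite alphabet, n ∈ ℕ, Q an n-type on X, and let A_1, …, A_J be nonempty subsets of T_n(Q). Let a = min_{1 ≤ j ≤ J} |A_j|. If k ∈ ℕ satisfies k > a⁻¹ · |T_n(Q)| · log(2·|T_n(Q)|), then there exist permutations π_1, …, π_k of {1,…,n} such that the number of indices j ∈ {1,…,J} for which ⋃_{i=1}^{k} π_i[A_j] = T_n(Q) is at least J/2. -/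
open scoped BigOperators Classical

noncomputable section

/-!
Permutations act transitively on `T_n(Q)`, so for a uniformly random permutation `σ` and any
`y ∈ T_n(Q)` the probability that `y ∈ σ[A]` is `|A| / |T_n(Q)|`. By a union bound over `y`,
`k` independent permutations fail to cover `T_n(Q)` with `A_j` with probability at most
`|T_n(Q)| (1 - a / |T_n(Q)|)^k ≤ |T_n(Q)| e^{-k a / |T_n(Q)|} < 1/2`. Averaging over `j`, some
choice of the `k` permutations leaves at most half of the `A_j` failing.
-/

open Finset
open scoped Pointwise

section SmulCovering

variable {G α : Type*} [Group G] [MulAction G α] {T A : Finset α}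

lemma smul_finset_subset_of_subset (hinv : ∀ g : G, ∀ x ∈ T, g • x ∈ T) (hA : A ⊆ T) (g : G) :
    g • A ⊆ T :=
  image_subset_iff.mpr fun x hx => hinv g x (hA hx)

variable [Fintype G]

lemma card_filter_mem_smul_finset_eq_of_smul_eq {y z : α} {h : G} (hzy : h • z = y) :
    #{g : G | y ∈ g • A} = #{g : G | z ∈ g • A} := by
  subst hzy
  refine card_equiv (Equiv.mulLeft h⁻¹) fun g => ?_
  simp [← inv_smul_mem_iff, mul_smul]

lemma sum_card_filter_mem_smul_finset (hinv : ∀ g : G, ∀ x ∈ T, g • x ∈ T) (hA : A ⊆ T) :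
    ∑ y ∈ T, #{g : G | y ∈ g • A} = Fintype.card G * #A := by
  have hswap := sum_card_bipartiteAbove_eq_sum_card_bipartiteBelow (s := T)
    (t := (univ : Finset G)) (r := fun y g => y ∈ g • A)
  simp only [bipartiteAbove, bipartiteBelow] at hswap
  rw [hswap]
  simp [filter_mem_eq_inter, inter_eq_right.mpr (smul_finset_subset_of_subset hinv hA _),
    card_smul_finset]

lemma card_filter_mem_smul_finset_mul_card (hinv : ∀ g : G, ∀ x ∈ T, g • x ∈ T)
    (htrans : ∀ x ∈ T, ∀ y ∈ T, ∃ g : G, g • x = y) (hA : A ⊆ T) {z : α} (hz : z ∈ T) :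
    #{g : G | z ∈ g • A} * #T = Fintype.card G * #A := by
  rw [← sum_card_filter_mem_smul_finset hinv hA, mul_comm, ← smul_eq_mul, ← sum_const]
  refine sum_congr rfl fun y hy => ?_
  obtain ⟨h, hzy⟩ := htrans z hz y hy
  exact (card_filter_mem_smul_finset_eq_of_smul_eq hzy).symm

lemma card_filter_forall_notMem_smul_finset {y : α} {k : ℕ} :
    #{g : Fin k → G | ∀ i, y ∉ g i • A} = #{g : G | y ∉ g • A} ^ k := by
  have hpi : ({g : Fin k → G | ∀ i, y ∉ g i • A} : Finset _) =
      Fintype.piFinset fun _ => {g : G | y ∉ g • A} := by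
    ext g
    simp
  rw [hpi, Fintype.card_piFinset_const]

lemma card_filter_biUnion_smul_finset_ne_le (hinv : ∀ g : G, ∀ x ∈ T, g • x ∈ T)
    (htrans : ∀ x ∈ T, ∀ y ∈ T, ∃ g : G, g • x = y) (hA : A ⊆ T) (k : ℕ) :
    (#{g : Fin k → G | univ.biUnion (fun i => g i • A) ≠ T} : ℝ) ≤
      #T * (Fintype.card G * (1 - #A / #T)) ^ k := by
  have hsub : ({g : Fin k → G | univ.biUnion (fun i => g i • A) ≠ T} : Finset _) ⊆
      T.biUnion fun y => {g : Fin k → G | ∀ i, y ∉ g i • A} := by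
    intro g hg
    have hcover : univ.biUnion (fun i => g i • A) ⊆ T :=
      biUnion_subset.mpr fun i _ => smul_finset_subset_of_subset hinv hA (g i)
    obtain ⟨y, hyT, hy⟩ := not_subset.mp fun h => (mem_filter.mp hg).2 (hcover.antisymm h)
    simp only [mem_biUnion, mem_univ, true_and, not_exists] at hy
    exact mem_biUnion.mpr ⟨y, hyT, by simpa using hy⟩
  have hterm : ∀ y ∈ T, (#{g : Fin k → G | ∀ i, y ∉ g i • A} : ℝ) =
      (Fintype.card G * (1 - #A / #T)) ^ k := by
    intro y hy
    have hT : (0 : ℝ) < #T := by exact_mod_cast card_pos.mpr ⟨y, hy⟩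
    have hcount : (#{g : G | y ∈ g • A} : ℝ) * #T = Fintype.card G * #A := by
      exact_mod_cast card_filter_mem_smul_finset_mul_card hinv htrans hA hy
    have hsplit : (#{g : G | y ∈ g • A} : ℝ) + #{g : G | y ∉ g • A} = Fintype.card G := by
      exact_mod_cast card_filter_add_card_filter_not _
    rw [card_filter_forall_notMem_smul_finset, Nat.cast_pow]
    congr 1
    field_simp
    linear_combination (#T : ℝ) * hsplit - hcount
  calc (#{g : Fin k → G | univ.biUnion (fun i => g i • A) ≠ T} : ℝ)
      ≤ #(T.biUnion fun y => ({g : Fin k → G | ∀ i, y ∉ g i • A} : Finset _)) := by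
        exact_mod_cast card_le_card hsub
    _ ≤ ∑ y ∈ T, (#{g : Fin k → G | ∀ i, y ∉ g i • A} : ℝ) := by exact_mod_cast card_biUnion_le
    _ = #T * (Fintype.card G * (1 - #A / #T)) ^ k := by
        rw [sum_congr rfl hterm, sum_const, nsmul_eq_mul]

end SmulCovering

lemma mul_one_sub_div_pow_lt_half {a N : ℝ} {k : ℕ} (ha : 0 < a) (haN : a ≤ N)
    (hk : a⁻¹ * N * Real.log (2 * N) < k) : N * (1 - a / N) ^ k < 1 / 2 := by
  have hN : 0 < N := ha.trans_le haN
  have hbase : 0 ≤ 1 - a / N := sub_nonneg.mpr ((div_le_one hN).mpr haN)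
  have hexp : -(a / N * k) < -Real.log (2 * N) := by
    rw [neg_lt_neg_iff, div_mul_eq_mul_div, lt_div_iff₀ hN]
    rw [inv_mul_eq_div, div_mul_eq_mul_div, div_lt_iff₀ ha] at hk
    linarith
  calc N * (1 - a / N) ^ k ≤ N * Real.exp (-(a / N)) ^ k := by
        gcongr
        exact Real.one_sub_le_exp_neg _
    _ = N * Real.exp (-(a / N * k)) := by rw [← Real.exp_nat_mul]; ring_nf
    _ < N * Real.exp (-Real.log (2 * N)) := by gcongr
    _ = 1 / 2 := by rw [Real.exp_neg, Real.exp_log (by positivity)]; field_simp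

lemma exists_half_le_card_filter {Ω ι : Type*} [Fintype Ω] [Nonempty Ω] [Fintype ι]
    (P : ι → Ω → Prop) [∀ j ω, Decidable (P j ω)]
    (h : ∀ j, (#{ω | ¬ P j ω} : ℝ) ≤ Fintype.card Ω / 2) :
    ∃ ω, (Fintype.card ι : ℝ) / 2 ≤ #{j | P j ω} := by
  have hswap : ∑ ω, (#{j | ¬ P j ω} : ℝ) = ∑ j, (#{ω | ¬ P j ω} : ℝ) := by
    exact_mod_cast sum_card_bipartiteAbove_eq_sum_card_bipartiteBelow (s := univ) (t := univ)
      (r := fun ω j => ¬ P j ω)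
  obtain ⟨ω, -, hω⟩ : ∃ ω ∈ (univ : Finset Ω),
      (#{j | ¬ P j ω} : ℝ) ≤ Fintype.card ι / 2 := by
    refine exists_le_of_sum_le univ_nonempty ?_
    calc ∑ ω, (#{j | ¬ P j ω} : ℝ) ≤ ∑ _j : ι, (Fintype.card Ω : ℝ) / 2 :=
          hswap ▸ sum_le_sum fun j _ => h j
      _ = ∑ _ω : Ω, (Fintype.card ι : ℝ) / 2 := by
          simp only [sum_const, card_univ, nsmul_eq_mul]; ring
  have hsplit : (#{j | P j ω} : ℝ) + #{j | ¬ P j ω} = Fintype.card ι := by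
    exact_mod_cast card_filter_add_card_filter_not _
  exact ⟨ω, by linarith⟩

theorem exists_smul_finset_cover_half {G α ι : Type*} [Group G] [Fintype G] [MulAction G α]
    [Fintype ι] {T : Finset α} (hinv : ∀ g : G, ∀ x ∈ T, g • x ∈ T)
    (htrans : ∀ x ∈ T, ∀ y ∈ T, ∃ g : G, g • x = y) (A : ι → Finset α)
    (hA : ∀ j, A j ⊆ T) (hne : ∀ j, (A j).Nonempty) (k : ℕ)
    (hk : ∀ j, (#(A j) : ℝ)⁻¹ * #T * Real.log (2 * #T) < k) :
    ∃ g : Fin k → G, (Fintype.card ι : ℝ) / 2 ≤ #{j | univ.biUnion (fun i => g i • A j) = T} := by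
  refine exists_half_le_card_filter (Ω := Fin k → G)
    (fun j g => univ.biUnion (fun i => g i • A j) = T) fun j => ?_
  have ha : (0 : ℝ) < #(A j) := by exact_mod_cast (hne j).card_pos
  have haT : (#(A j) : ℝ) ≤ #T := by exact_mod_cast card_le_card (hA j)
  calc (#{g : Fin k → G | ¬ univ.biUnion (fun i => g i • A j) = T} : ℝ)
      ≤ #T * (Fintype.card G * (1 - #(A j) / #T)) ^ k :=
        card_filter_biUnion_smul_finset_ne_le hinv htrans (hA j) k
    _ = Fintype.card G ^ k * (#T * (1 - #(A j) / #T) ^ k) := by rw [mul_pow]; ring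
    _ ≤ Fintype.card G ^ k * (1 / 2) := by
        gcongr
        exact (mul_one_sub_div_pow_lt_half ha haT (hk j)).le
    _ = Fintype.card (Fin k → G) / 2 := by
        rw [Fintype.card_fun, Fintype.card_fin, Nat.cast_pow]; ring

section TypeClass

variable {X : Type*} [Fintype X] {n : ℕ} {P : X → ℝ}

lemma empDist_comp_perm (x : Fin n → X) (σ : Equiv.Perm (Fin n)) :
    empDist (x ∘ σ) = empDist x := by
  funext a
  unfold empDist
  congr 2
  exact card_equiv σ (by simp)

lemma card_filter_eq_of_empDist_eq {x z : Fin n → X} (h : empDist x = empDist z) (a : X) :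
    #{t | x t = a} = #{t | z t = a} := by
  rcases n.eq_zero_or_pos with rfl | hn
  · simp [univ_eq_empty]
  · have ha := congrFun h a
    unfold empDist at ha
    exact_mod_cast (div_left_inj' (by positivity)).mp ha

lemma exists_perm_comp_eq_of_empDist_eq {x z : Fin n → X} (h : empDist x = empDist z) :
    ∃ σ : Equiv.Perm (Fin n), x ∘ σ = z :=
  ⟨Equiv.ofFiberEquiv fun a => Fintype.equivOfCardEq <| by
      simp_rw [Fintype.card_subtype]; exact (card_filter_eq_of_empDist_eq h a).symm,
    funext (Equiv.ofFiberEquiv_map _)⟩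

/- `DomMulAct.mk σ • x = x ∘ σ` turns precomposition with permutations into a left action. -/
lemma DomMulAct.smul_mem_typeClass (g : (Equiv.Perm (Fin n))ᵈᵐᵃ) {x : Fin n → X}
    (hx : x ∈ typeClass n P) : g • x ∈ typeClass n P := by
  simp only [typeClass, mem_filter, mem_univ, true_and] at hx ⊢
  exact (empDist_comp_perm x _).trans hx

lemma DomMulAct.exists_smul_eq_of_mem_typeClass {x z : Fin n → X} (hx : x ∈ typeClass n P)
    (hz : z ∈ typeClass n P) : ∃ g : (Equiv.Perm (Fin n))ᵈᵐᵃ, g • x = z := by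
  simp only [typeClass, mem_filter, mem_univ, true_and] at hx hz
  obtain ⟨σ, hσ⟩ := exists_perm_comp_eq_of_empDist_eq (hx.trans hz.symm)
  exact ⟨DomMulAct.mk σ, hσ⟩

end TypeClass

instance DomMulAct.instFintype {M : Type*} [Fintype M] : Fintype Mᵈᵐᵃ :=
  Fintype.ofEquiv _ DomMulAct.mk

theorem simultaneous_covering_general
    {X : Type*} [Fintype X] (n : ℕ) (Q : X → ℝ)
    (J : ℕ) (A : Fin J → Finset (Fin n → X))
    (hA : ∀ j, A j ⊆ typeClass n Q) (hne : ∀ j, (A j).Nonempty)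
    (k : ℕ)
    (hk : ∀ j, (((A j).card : ℝ))⁻¹ * ((typeClass n Q).card : ℝ) *
      Real.log (2 * ((typeClass n Q).card : ℝ)) < k) :
    ∃ π : Fin k → Equiv.Perm (Fin n),
      (J : ℝ) / 2 ≤
        ((Finset.univ.filter fun j : Fin J =>
          (Finset.univ.biUnion fun i => (A j).image fun x => x ∘ (π i)) =
            typeClass n Q).card : ℝ) := by
  obtain ⟨g, hg⟩ := exists_smul_finset_cover_half
    (fun g _ hx => DomMulAct.smul_mem_typeClass g hx)
    (fun _ hx _ hz => DomMulAct.exists_smul_eq_of_mem_typeClass hx hz) A hA hne k hk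
  rw [Fintype.card_fin] at hg
  refine ⟨fun i => DomMulAct.mk.symm (g i), ?_⟩
  convert hg using 7
  ext x
  simp only [mem_image, smul_finset_def]
  rfl

/-- **Lemma 3** (simultaneous covering): if `A_1, …, A_J` are nonempty subsets of the type
class `T_n(Q)` and `k > a⁻¹·|T_n(Q)|·log (2·|T_n(Q)|)` where `a = min_j |A_j|` (expressed
equivalently by requiring the bound for every `j`), then there is a single sequence of
permutations `π_1, …, π_k` under which at least half of the sets `A_j` cover `T_n(Q)`. -/
theorem simultaneous_covering
    {X : Type*} [Fintype X] (n : ℕ) (Q : X → ℝ) (hQ : IsNType n Q)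
    (J : ℕ) (A : Fin J → Finset (Fin n → X))
    (hA : ∀ j, A j ⊆ typeClass n Q) (hne : ∀ j, (A j).Nonempty)
    (k : ℕ)
    (hk : ∀ j, (((A j).card : ℝ))⁻¹ * ((typeClass n Q).card : ℝ) *
      Real.log (2 * ((typeClass n Q).card : ℝ)) < k) :
    ∃ π : Fin k → Equiv.Perm (Fin n),
      (J : ℝ) / 2 ≤
        ((Finset.univ.filter fun j : Fin J =>
          (Finset.univ.biUnion fun i => (A j).image fun x => x ∘ (π i)) =
            typeClass n Q).card : ℝ) :=
  simultaneous_covering_general n Q J A hA hne k hk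
end
end

section
/- Simultaneous covering for codebooks (Corollary to Lemma 3): Let X be a finite alphabet, n ∈ ℕ, Q an n-type on X, N ∈ ℕ₊, and let F be a finite collection of codebooks, i.e., N-tuples C ∈ T_n(Q)^N. For a codebook C write |C| for the number of distinct entries of C, and for a permutation π of {1,…,n} write π[C] = {π[x] : x an entry of C}. Let c = min_{C ∈ F} |C|. If k ∈ ℕ satisfies k > c⁻¹ · |T_n(Q)| · log(2·|T_n(Q)|), then there exist permutations π_1, …, π_k of {1,…,n} such that the number of codebooks C ∈ F for which ⋃_{i=1}^{k} π_i[C] = T_n(Q) is at least |F|/2. -/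
open scoped BigOperators Classical

noncomputable section

section CoveringAux

open Finset

variable {X : Type*} [Fintype X] {n : ℕ}

lemma counts_eq_of_empDist_eq {x y : Fin n → X} (h : empDist x = empDist y) (a : X) :
    (univ.filter fun t => x t = a).card = (univ.filter fun t => y t = a).card := by
  rcases Nat.eq_zero_or_pos n with hn | hn
  · have h1 : (univ.filter fun t => x t = a).card ≤ 0 := by
      subst hn; exact le_trans (card_filter_le _ _) (by simp)
    have h2 : (univ.filter fun t => y t = a).card ≤ 0 := by
      subst hn; exact le_trans (card_filter_le _ _) (by simp)
    omega
  · have h2 := congrFun h a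
    unfold empDist at h2
    have hn' : (n : ℝ) ≠ 0 := Nat.cast_ne_zero.mpr hn.ne'
    field_simp at h2
    exact_mod_cast h2

lemma exists_perm_comp {x y : Fin n → X}
    (h : ∀ a, (univ.filter fun t => x t = a).card = (univ.filter fun t => y t = a).card) :
    ∃ π : Equiv.Perm (Fin n), x ∘ π = y := by
  have e : ∀ a, {t : Fin n // y t = a} ≃ {t : Fin n // x t = a} := fun a =>
    Fintype.equivOfCardEq (by
      simp only [Fintype.card_subtype]
      exact (h a).symm)
  refine ⟨(Equiv.sigmaFiberEquiv y).symm.trans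
    ((Equiv.sigmaCongrRight e).trans (Equiv.sigmaFiberEquiv x)), ?_⟩
  funext t
  exact (e (y t) ⟨t, rfl⟩).2

lemma comp_perm_counts (x : Fin n → X) (π : Equiv.Perm (Fin n)) (a : X) :
    (univ.filter fun t => (x ∘ π) t = a).card = (univ.filter fun t => x t = a).card := by
  apply Finset.card_bij (fun t _ => π t)
  · intro t ht; simp_all
  · intro t _ t' _ hh; exact π.injective hh
  · intro t ht
    refine ⟨π.symm t, ?_, by simp⟩
    simp_all

lemma comp_perm_mem_typeClass {Q : X → ℝ} {x : Fin n → X} (hx : x ∈ typeClass n Q)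
    (π : Equiv.Perm (Fin n)) : x ∘ π ∈ typeClass n Q := by
  simp only [typeClass, Finset.mem_filter, Finset.mem_univ, true_and] at hx ⊢
  rw [← hx]
  funext a
  unfold empDist
  rw [comp_perm_counts]

lemma empDist_eq_of_mem {Q : X → ℝ} {x : Fin n → X} (hx : x ∈ typeClass n Q) : empDist x = Q :=
  (Finset.mem_filter.mp hx).2

lemma fiber_card_mul {Q : X → ℝ} {x y : Fin n → X}
    (hx : x ∈ typeClass n Q) (hy : y ∈ typeClass n Q) :
    (univ.filter fun π : Equiv.Perm (Fin n) => x ∘ π = y).card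
      * (typeClass n Q).card = Fintype.card (Equiv.Perm (Fin n)) := by
  have key : ∀ y' ∈ typeClass n Q,
      (univ.filter fun π : Equiv.Perm (Fin n) => x ∘ π = y').card
        = (univ.filter fun π : Equiv.Perm (Fin n) => x ∘ π = y).card := by
    intro y' hy'
    have hcnt : ∀ a, (univ.filter fun t => y' t = a).card = (univ.filter fun t => y t = a).card :=
      counts_eq_of_empDist_eq (by rw [empDist_eq_of_mem hy', empDist_eq_of_mem hy])
    obtain ⟨ρ, hρ⟩ := exists_perm_comp hcnt
    apply Finset.card_bij (fun π _ => π * ρ)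
    · intro π hπ
      simp only [mem_filter, mem_univ, true_and] at hπ ⊢
      rw [Equiv.Perm.coe_mul, ← Function.comp_assoc, hπ, hρ]
    · intro π _ π' _ hh; exact mul_right_cancel hh
    · intro σ hσ
      simp only [mem_filter, mem_univ, true_and] at hσ
      refine ⟨σ * ρ⁻¹, ?_, by group⟩
      simp only [mem_filter, mem_univ, true_and]
      rw [Equiv.Perm.coe_mul, ← Function.comp_assoc, hσ, ← hρ, Function.comp_assoc]
      funext t; simp
  have hsum : (univ : Finset (Equiv.Perm (Fin n))).card
      = ∑ y' ∈ typeClass n Q, (univ.filter fun π : Equiv.Perm (Fin n) => x ∘ π = y').card :=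
    Finset.card_eq_sum_card_fiberwise (fun π _ => comp_perm_mem_typeClass hx π)
  rw [← Finset.card_univ, hsum, Finset.sum_congr rfl key, Finset.sum_const, smul_eq_mul, mul_comm]

lemma covered_card_mul {Q : X → ℝ} {S : Finset (Fin n → X)} (hS : ∀ x ∈ S, x ∈ typeClass n Q)
    {y : Fin n → X} (hy : y ∈ typeClass n Q) :
    (univ.filter fun σ : Equiv.Perm (Fin n) => ∃ x ∈ S, x ∘ σ = y).card
      * (typeClass n Q).card = S.card * Fintype.card (Equiv.Perm (Fin n)) := by
  have heq : (univ.filter fun σ : Equiv.Perm (Fin n) => ∃ x ∈ S, x ∘ σ = y)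
      = S.biUnion fun x => univ.filter fun σ : Equiv.Perm (Fin n) => x ∘ σ = y := by
    ext σ; simp
  rw [heq, Finset.card_biUnion, Finset.sum_mul]
  · rw [Finset.sum_congr rfl fun x hx => fiber_card_mul (hS x hx) hy, Finset.sum_const,
      smul_eq_mul]
  · intro x hx x' hx' hne
    simp only [Finset.disjoint_left, mem_filter, mem_univ, true_and]
    intro σ h1 h2
    apply hne
    have : x ∘ σ ∘ σ.symm = x' ∘ σ ∘ σ.symm := by
      rw [← Function.comp_assoc, ← Function.comp_assoc, h1, h2]
    simpa using this

lemma filter_forall_card {α : Type*} [Fintype α] {k : ℕ} (p : α → Prop) [DecidablePred p]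
    [DecidablePred fun f : Fin k → α => ∀ i, p (f i)] :
    (univ.filter fun f : Fin k → α => ∀ i, p (f i)).card
      = (univ.filter p).card ^ k := by
  rw [← Fintype.card_subtype, ← Fintype.card_subtype]
  rw [Fintype.card_congr (Equiv.subtypePiEquivPi (p := fun _ : Fin k => p))]
  rw [Fintype.card_pi]
  simp

end CoveringAux

set_option maxHeartbeats 2000000 in
/-- **Corollary to Lemma 3** (simultaneous covering for codebooks): let `F` be a finite
collection of codebooks, i.e. `N`-tuples of sequences from the type class `T_n(Q)`. Writing
`|C|` for the number of distinct entries of `C`, if `k > c⁻¹·|T_n(Q)|·log (2·|T_n(Q)|)`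
where `c = min_{C ∈ F} |C|` (expressed equivalently by requiring the bound for every
`C ∈ F`), then there is a single sequence of permutations `π_1, …, π_k` under which at least
half of the codebooks in `F` have their permuted entry sets covering `T_n(Q)`. -/
theorem simultaneous_covering_codebooks
    {X : Type*} [Fintype X] (n : ℕ) (Q : X → ℝ) (hQ : IsNType n Q)
    (N : ℕ) (hN : 0 < N)
    (F : Finset (Fin N → Fin n → X))
    (hF : ∀ C ∈ F, ∀ m, C m ∈ typeClass n Q)
    (k : ℕ)
    (hk : ∀ C ∈ F, (((Finset.univ.image C).card : ℝ))⁻¹ * ((typeClass n Q).card : ℝ) *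
      Real.log (2 * ((typeClass n Q).card : ℝ)) < k) :
    ∃ π : Fin k → Equiv.Perm (Fin n),
      (F.card : ℝ) / 2 ≤
        ((F.filter fun C =>
          (Finset.univ.biUnion fun i => (Finset.univ.image C).image fun x => x ∘ (π i)) =
            typeClass n Q).card : ℝ) := by
  classical
  rcases F.eq_empty_or_nonempty with hFe | hFne
  · exact ⟨fun _ => 1, by simp [hFe]⟩
  obtain ⟨C₀, hC₀⟩ := hFne
  have hTne : (typeClass n Q).Nonempty := ⟨C₀ ⟨0, hN⟩, hF C₀ hC₀ _⟩
  have hTpos : (0:ℝ) < ((typeClass n Q).card : ℝ) := by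
    exact_mod_cast Finset.card_pos.mpr hTne
  have hGpos : (0:ℝ) < (Fintype.card (Equiv.Perm (Fin n)) : ℝ) := by
    exact_mod_cast Fintype.card_pos
  set Tc : ℝ := ((typeClass n Q).card : ℝ) with hTc
  set g : ℝ := (Fintype.card (Equiv.Perm (Fin n)) : ℝ) with hg
  -- per-codebook bound on the number of bad permutation tuples
  have main : ∀ C ∈ F,
      ((Finset.univ.filter fun π : Fin k → Equiv.Perm (Fin n) =>
        ¬ ((Finset.univ.biUnion fun i => (Finset.univ.image C).image fun x => x ∘ (π i)) =
          typeClass n Q)).card : ℝ) < g ^ k / 2 := by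
    intro C hC
    set S := Finset.univ.image C with hSdef
    have hSsub : ∀ x ∈ S, x ∈ typeClass n Q := by
      intro x hx
      obtain ⟨m, -, rfl⟩ := Finset.mem_image.mp hx
      exact hF C hC m
    have hcpos : (0:ℝ) < (S.card : ℝ) := by
      exact_mod_cast Finset.card_pos.mpr ⟨C ⟨0, hN⟩, Finset.mem_image_of_mem _ (Finset.mem_univ _)⟩
    have hcle : (S.card : ℝ) ≤ Tc := by
      rw [hTc]
      exact_mod_cast Finset.card_le_card (fun x hx => hSsub x hx)
    set c : ℝ := (S.card : ℝ) with hcdef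
    -- key analytic inequality from the hypothesis hk
    have hkey : Real.log (2 * Tc) < (k : ℝ) * (c / Tc) := by
      have h := hk C hC
      have h2 := mul_lt_mul_of_pos_right h (div_pos hcpos hTpos)
      calc Real.log (2 * Tc) = c⁻¹ * Tc * Real.log (2 * Tc) * (c / Tc) := by
            field_simp
          _ < (k : ℝ) * (c / Tc) := h2
    -- per-target bound on bad single permutations
    have hm : ∀ y ∈ typeClass n Q,
        ((Finset.univ.filter fun σ : Equiv.Perm (Fin n) => ∀ x ∈ S, ¬ (x ∘ σ = y)).card : ℝ)
          ≤ g * (1 - c / Tc) := by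
      intro y hy
      have hcompl : (Finset.univ.filter fun σ : Equiv.Perm (Fin n) => ∀ x ∈ S, ¬ (x ∘ σ = y))
          = Finset.univ \ (Finset.univ.filter fun σ : Equiv.Perm (Fin n) => ∃ x ∈ S, x ∘ σ = y) := by
        rw [← Finset.filter_not]
        apply Finset.filter_congr
        intro σ _
        push_neg
        rfl
      have hcov := covered_card_mul hSsub hy
      have hcovR : ((Finset.univ.filter fun σ : Equiv.Perm (Fin n) => ∃ x ∈ S, x ∘ σ = y).card : ℝ)
          = c * g / Tc := by
        have : ((Finset.univ.filter fun σ : Equiv.Perm (Fin n) => ∃ x ∈ S, x ∘ σ = y).card : ℝ) * Tc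
            = c * g := by
          rw [hcdef, hTc, hg]
          exact_mod_cast congrArg (Nat.cast : ℕ → ℝ) hcov
        field_simp at this ⊢
        linarith
      rw [hcompl, Finset.card_sdiff_of_subset (Finset.filter_subset _ _)]
      have hle : (Finset.univ.filter fun σ : Equiv.Perm (Fin n) => ∃ x ∈ S, x ∘ σ = y).card
          ≤ Finset.univ.card := Finset.card_filter_le _ _
      push_cast [Nat.cast_sub hle]
      rw [Finset.card_univ] at *
      rw [hcovR]
      rw [mul_sub]
      rw [mul_one]
      have : g * (c / Tc) = c * g / Tc := by ring
      rw [this]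
  -- bad tuples for C are contained in union over uncovered targets
    have hsubset : (Finset.univ.filter fun π : Fin k → Equiv.Perm (Fin n) =>
        ¬ ((Finset.univ.biUnion fun i => S.image fun x => x ∘ (π i)) = typeClass n Q))
        ⊆ (typeClass n Q).biUnion fun y =>
            Finset.univ.filter fun π : Fin k → Equiv.Perm (Fin n) =>
              ∀ i, ∀ x ∈ S, ¬ (x ∘ (π i) = y) := by
      intro π hπ
      simp only [Finset.mem_filter, Finset.mem_univ, true_and] at hπ
      have hsub : (Finset.univ.biUnion fun i => S.image fun x => x ∘ (π i)) ⊆ typeClass n Q := by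
        intro z hz
        simp only [Finset.mem_biUnion, Finset.mem_image, Finset.mem_univ, true_and] at hz
        obtain ⟨i, x, hx, rfl⟩ := hz
        exact comp_perm_mem_typeClass (hSsub x hx) (π i)
      obtain ⟨y, hyT, hyn⟩ := Finset.exists_of_ssubset (hsub.ssubset_of_ne hπ)
      refine Finset.mem_biUnion.mpr ⟨y, hyT, ?_⟩
      simp only [Finset.mem_filter, Finset.mem_univ, true_and]
      intro i x hx hxy
      exact hyn (Finset.mem_biUnion.mpr ⟨i, Finset.mem_univ i,
        Finset.mem_image.mpr ⟨x, hx, hxy⟩⟩)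
    have hbadcard : ((Finset.univ.filter fun π : Fin k → Equiv.Perm (Fin n) =>
        ¬ ((Finset.univ.biUnion fun i => S.image fun x => x ∘ (π i)) = typeClass n Q)).card : ℝ)
        ≤ ∑ y ∈ typeClass n Q,
            (((Finset.univ.filter fun σ : Equiv.Perm (Fin n) => ∀ x ∈ S, ¬ (x ∘ σ = y)).card : ℝ)) ^ k := by
      calc ((Finset.univ.filter fun π : Fin k → Equiv.Perm (Fin n) =>
            ¬ ((Finset.univ.biUnion fun i => S.image fun x => x ∘ (π i)) = typeClass n Q)).card : ℝ)
          ≤ (((typeClass n Q).biUnion fun y =>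
              Finset.univ.filter fun π : Fin k → Equiv.Perm (Fin n) =>
                ∀ i, ∀ x ∈ S, ¬ (x ∘ (π i) = y)).card : ℝ) := by
            exact_mod_cast Finset.card_le_card hsubset
        _ ≤ ∑ y ∈ typeClass n Q,
              ((Finset.univ.filter fun π : Fin k → Equiv.Perm (Fin n) =>
                ∀ i, ∀ x ∈ S, ¬ (x ∘ (π i) = y)).card : ℝ) := by
            exact_mod_cast Finset.card_biUnion_le
        _ = ∑ y ∈ typeClass n Q,
              (((Finset.univ.filter fun σ : Equiv.Perm (Fin n) => ∀ x ∈ S, ¬ (x ∘ σ = y)).card : ℝ)) ^ k := by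
            refine Finset.sum_congr rfl fun y _ => ?_
            exact_mod_cast congrArg (Nat.cast : ℕ → ℝ)
              (filter_forall_card (fun σ : Equiv.Perm (Fin n) => ∀ x ∈ S, ¬ (x ∘ σ = y)))
    -- strict bound per target
    have hry : ∀ y ∈ typeClass n Q,
        (((Finset.univ.filter fun σ : Equiv.Perm (Fin n) => ∀ x ∈ S, ¬ (x ∘ σ = y)).card : ℝ)) ^ k
          < g ^ k / (2 * Tc) := by
      intro y hy
      have h0 : (0:ℝ) ≤ ((Finset.univ.filter fun σ : Equiv.Perm (Fin n) =>
          ∀ x ∈ S, ¬ (x ∘ σ = y)).card : ℝ) := Nat.cast_nonneg _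
      have h1 := hm y hy
      have hr0 : (0:ℝ) ≤ 1 - c / Tc := by
        have : c / Tc ≤ 1 := (div_le_one hTpos).mpr hcle
        linarith
      have hexp : 1 - c / Tc ≤ Real.exp (-(c / Tc)) := by
        have := Real.add_one_le_exp (-(c / Tc))
        linarith
      calc (((Finset.univ.filter fun σ : Equiv.Perm (Fin n) => ∀ x ∈ S, ¬ (x ∘ σ = y)).card : ℝ)) ^ k
          ≤ (g * (1 - c / Tc)) ^ k := pow_le_pow_left₀ h0 h1 k
        _ ≤ (g * Real.exp (-(c / Tc))) ^ k := by
            apply pow_le_pow_left₀ (by positivity)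
            exact mul_le_mul_of_nonneg_left hexp (le_of_lt hGpos)
        _ = g ^ k * Real.exp (-((k:ℝ) * (c / Tc))) := by
            rw [mul_pow, ← Real.exp_nat_mul]
            ring_nf
        _ < g ^ k / (2 * Tc) := by
            have h2T : (0:ℝ) < 2 * Tc := by linarith
            have : Real.exp (-((k:ℝ) * (c / Tc))) < 1 / (2 * Tc) := by
              rw [show (1 : ℝ) / (2 * Tc) = Real.exp (-Real.log (2 * Tc)) by
                rw [Real.exp_neg, Real.exp_log h2T, one_div]]
              exact Real.exp_lt_exp.mpr (by linarith [hkey])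
            calc g ^ k * Real.exp (-((k:ℝ) * (c / Tc)))
                < g ^ k * (1 / (2 * Tc)) := by
                  apply mul_lt_mul_of_pos_left this (by positivity)
              _ = g ^ k / (2 * Tc) := by ring
    calc ((Finset.univ.filter fun π : Fin k → Equiv.Perm (Fin n) =>
          ¬ ((Finset.univ.biUnion fun i => S.image fun x => x ∘ (π i)) = typeClass n Q)).card : ℝ)
        ≤ ∑ y ∈ typeClass n Q,
            (((Finset.univ.filter fun σ : Equiv.Perm (Fin n) => ∀ x ∈ S, ¬ (x ∘ σ = y)).card : ℝ)) ^ k :=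
          hbadcard
      _ < ∑ _y ∈ typeClass n Q, g ^ k / (2 * Tc) := Finset.sum_lt_sum_of_nonempty hTne hry
      _ = Tc * (g ^ k / (2 * Tc)) := by rw [Finset.sum_const, nsmul_eq_mul, hTc]
      _ = g ^ k / 2 := by field_simp
  -- double counting over permutation tuples
  have swap : ∑ π : Fin k → Equiv.Perm (Fin n),
      ((F.filter fun C =>
        ¬ ((Finset.univ.biUnion fun i => (Finset.univ.image C).image fun x => x ∘ (π i)) =
          typeClass n Q)).card : ℝ)
      = ∑ C ∈ F, ((Finset.univ.filter fun π : Fin k → Equiv.Perm (Fin n) =>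
          ¬ ((Finset.univ.biUnion fun i => (Finset.univ.image C).image fun x => x ∘ (π i)) =
            typeClass n Q)).card : ℝ) := by
    simp_rw [Finset.card_filter]
    push_cast
    rw [Finset.sum_comm]
  have hcardfun : (Fintype.card (Fin k → Equiv.Perm (Fin n)) : ℝ) = g ^ k := by
    rw [Fintype.card_fun, Fintype.card_fin, hg]
    push_cast
    ring
  have total : ∑ π : Fin k → Equiv.Perm (Fin n),
      ((F.filter fun C =>
        ¬ ((Finset.univ.biUnion fun i => (Finset.univ.image C).image fun x => x ∘ (π i)) =
          typeClass n Q)).card : ℝ)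
      < ∑ _π : Fin k → Equiv.Perm (Fin n), (F.card : ℝ) / 2 := by
    rw [swap]
    have hFposn : (0:ℝ) < (F.card : ℝ) := by
      exact_mod_cast Finset.card_pos.mpr ⟨C₀, hC₀⟩
    calc ∑ C ∈ F, ((Finset.univ.filter fun π : Fin k → Equiv.Perm (Fin n) =>
          ¬ ((Finset.univ.biUnion fun i => (Finset.univ.image C).image fun x => x ∘ (π i)) =
            typeClass n Q)).card : ℝ)
        < ∑ _C ∈ F, g ^ k / 2 := Finset.sum_lt_sum_of_nonempty ⟨C₀, hC₀⟩ main
      _ = (F.card : ℝ) * (g ^ k / 2) := by rw [Finset.sum_const, nsmul_eq_mul]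
      _ = ∑ _π : Fin k → Equiv.Perm (Fin n), (F.card : ℝ) / 2 := by
          rw [Finset.sum_const, nsmul_eq_mul, Finset.card_univ, hcardfun]
          ring
  obtain ⟨π, -, hπ⟩ := Finset.exists_lt_of_sum_lt total
  refine ⟨π, ?_⟩
  have hsplit := Finset.card_filter_add_card_filter_not (s := F)
    (p := fun C =>
      (Finset.univ.biUnion fun i => (Finset.univ.image C).image fun x => x ∘ (π i)) =
        typeClass n Q)
  have : ((F.filter fun C =>
      (Finset.univ.biUnion fun i => (Finset.univ.image C).image fun x => x ∘ (π i)) =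
        typeClass n Q).card : ℝ)
      + ((F.filter fun C =>
        ¬ ((Finset.univ.biUnion fun i => (Finset.univ.image C).image fun x => x ∘ (π i)) =
          typeClass n Q)).card : ℝ) = (F.card : ℝ) := by
    exact_mod_cast hsplit
  linarith


end
end

section
/- Entropy replacement lemma (Lemma 8): Let Y be a finite set. There exists a continuous function ε : [0,1) → ℝ with ε(0) = 0, depending only on |Y|, with the following property. For all finite sets X and Z, every joint pmf P_{XYZ} on X×Y×Z factored as P_{XYZ} = P_X × P_{Y|X} × P_{Z|YX}, every pmf Q_Y on Y, every δ ∈ [0,1), and every subset E ⊆ X such that |P_{Y|X}(y|x) − Q_Y(y)| ≤ δ·Q_Y(y) for all x ∈ E and y ∈ Y: defining the joint pmf P̃_{XYZ} = P_X × Q_Y × P_{Z|YX} (the Y-component replaced by an independent Q_Y-distributed variable), one has |H_P(Y | Z, X) − H_{P̃}(Y | Z, X)| ≤ (ε(δ) + 1 − P_X(E)) · log|Y|, where H_P(Y|Z,X) and H_{P̃}(Y|Z,X) denote conditional Shannon entropies computed under P_{XYZ} and P̃_{XYZ} respectively. -/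
open scoped BigOperators Classical

noncomputable section

/-- Conditional entropy `H_Q(Y | Z, X)` of a joint pmf `Q` on `X × Y × Z`, computed by the
formula `-∑ Q(x,y,z)·log (Q(x,y,z) / ∑_{y'} Q(x,y',z))` (natural log, `0·log 0 = 0`). -/
def condEntMid {X Y Z : Type*} [Fintype X] [Fintype Y] [Fintype Z]
    (Q : X × Y × Z → ℝ) : ℝ :=
  -∑ x, ∑ y, ∑ z, Q (x, y, z) * Real.log (Q (x, y, z) / ∑ y', Q (x, y', z))

namespace EntRep

variable {Y Z : Type*} [Fintype Y] [Fintype Z]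

def hYZ (A : Y → Z → ℝ) : ℝ :=
  -∑ y, ∑ z, A y z * Real.log (A y z / ∑ y', A y' z)

lemma hYZ_nonneg (A : Y → Z → ℝ) (hA : ∀ y z, 0 ≤ A y z) : 0 ≤ hYZ A := by
  rw [hYZ, neg_nonneg]
  apply Finset.sum_nonpos; intro y _
  apply Finset.sum_nonpos; intro z _
  rcases (hA y z).lt_or_eq with h | h
  · have hS : A y z ≤ ∑ y', A y' z :=
      Finset.single_le_sum (fun i _ => hA i z) (Finset.mem_univ y)
    have hSpos : 0 < ∑ y', A y' z := lt_of_lt_of_le h hS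
    have hr : A y z / (∑ y', A y' z) ≤ 1 := (div_le_one hSpos).mpr hS
    have hlog : Real.log (A y z / ∑ y', A y' z) ≤ 0 :=
      Real.log_nonpos (by positivity) hr
    exact mul_nonpos_of_nonneg_of_nonpos h.le hlog
  · simp [← h]

lemma hYZ_le [Nonempty Y] (A : Y → Z → ℝ) (hA : ∀ y z, 0 ≤ A y z)
    (hA1 : ∑ y, ∑ z, A y z = 1) : hYZ A ≤ Real.log (Fintype.card Y) := by
  have hc : (0:ℝ) < Fintype.card Y := by
    exact_mod_cast Fintype.card_pos
  have key : ∀ y z, -(A y z * Real.log (A y z / ∑ y', A y' z)) ≤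
      (∑ y', A y' z) / Fintype.card Y - A y z + A y z * Real.log (Fintype.card Y) := by
    intro y z
    set S := ∑ y', A y' z with hSdef
    have hS0 : 0 ≤ S := Finset.sum_nonneg fun i _ => hA i z
    rcases (hA y z).lt_or_eq with h | h
    · have hS : A y z ≤ S := Finset.single_le_sum (fun i _ => hA i z) (Finset.mem_univ y)
      have hSpos : 0 < S := lt_of_lt_of_le h hS
      have hlog1 : Real.log (S / (A y z * Fintype.card Y)) ≤ S / (A y z * Fintype.card Y) - 1 :=
        Real.log_le_sub_one_of_pos (by positivity)
      have hsplit : Real.log (S / A y z) =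
          Real.log (S / (A y z * Fintype.card Y)) + Real.log (Fintype.card Y) := by
        rw [← Real.log_mul (by positivity) (by positivity)]
        congr 1
        field_simp
      have hneg : -(A y z * Real.log (A y z / S)) = A y z * Real.log (S / A y z) := by
        rw [Real.log_div (ne_of_gt h) (ne_of_gt hSpos), Real.log_div (ne_of_gt hSpos) (ne_of_gt h)]
        ring
      rw [hneg, hsplit, mul_add]
      have : A y z * Real.log (S / (A y z * Fintype.card Y)) ≤ S / Fintype.card Y - A y z := by
        calc A y z * Real.log (S / (A y z * Fintype.card Y))
            ≤ A y z * (S / (A y z * Fintype.card Y) - 1) := by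
              exact mul_le_mul_of_nonneg_left hlog1 h.le
          _ = S / Fintype.card Y - A y z := by field_simp
      linarith
    · rw [← h]
      simp
      positivity
  calc hYZ A = ∑ y, ∑ z, -(A y z * Real.log (A y z / ∑ y', A y' z)) := by
        rw [hYZ]; simp [Finset.sum_neg_distrib]
    _ ≤ ∑ y, ∑ z, ((∑ y', A y' z) / Fintype.card Y - A y z + A y z * Real.log (Fintype.card Y)) := by
        apply Finset.sum_le_sum; intro y _; apply Finset.sum_le_sum; intro z _; exact key y z
    _ = Real.log (Fintype.card Y) := by
        simp only [Finset.sum_add_distrib, Finset.sum_sub_distrib, ← Finset.sum_mul]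
        have h2 : ∑ z : Z, ∑ y' : Y, A y' z = 1 := by rw [Finset.sum_comm]; exact hA1
        have h1 : ∑ y : Y, ∑ z, (∑ y', A y' z) / (Fintype.card Y : ℝ) = 1 := by
          rw [Finset.sum_comm]
          simp only [Finset.sum_const, Finset.card_univ, nsmul_eq_mul]
          calc ∑ z : Z, ↑(Fintype.card Y) * ((∑ y' : Y, A y' z) / ↑(Fintype.card Y))
              = ∑ z : Z, ∑ y' : Y, A y' z := by
                apply Finset.sum_congr rfl; intro z _; field_simp
            _ = 1 := h2
        rw [h1, hA1]
        ring

lemma condEntMid_eq {X : Type*} [Fintype X] (PX : X → ℝ) (G : X → Y → Z → ℝ) :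
    condEntMid (fun p : X × Y × Z => PX p.1 * G p.1 p.2.1 p.2.2) =
      ∑ x, PX x * hYZ (G x) := by
  unfold condEntMid hYZ
  simp only [mul_neg, ← Finset.sum_neg_distrib]
  congr 1
  funext x
  rcases eq_or_ne (PX x) 0 with h | h
  · simp [h]
  · rw [Finset.mul_sum]
    apply Finset.sum_congr rfl; intro y _
    rw [Finset.mul_sum]
    apply Finset.sum_congr rfl; intro z _
    have hs : ∑ y', PX x * G x y' z = PX x * ∑ y', G x y' z := by
      rw [Finset.mul_sum]
    rw [hs, mul_div_mul_left _ _ h]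
    ring

lemma compare [Nonempty Y] (p q : Y → ℝ) (W : Y → Z → ℝ)
    (hp0 : ∀ y, 0 ≤ p y) (hp1 : ∑ y, p y = 1)
    (hq0 : ∀ y, 0 ≤ q y)
    (hW0 : ∀ y z, 0 ≤ W y z) (hW1 : ∀ y, ∑ z, W y z = 1)
    (hBtot : ∑ y, ∑ z, q y * W y z = 1)
    (δ : ℝ) (hδ0 : 0 ≤ δ) (hδ1 : δ < 1)
    (hclose : ∀ y, |p y - q y| ≤ δ * q y)
    (hB_le : hYZ (fun y z => q y * W y z) ≤ Real.log (Fintype.card Y)) :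
    |hYZ (fun y z => p y * W y z) - hYZ (fun y z => q y * W y z)| ≤
      Real.log ((1 + δ) / (1 - δ)) + δ * Real.log (Fintype.card Y) := by
  set L := Real.log ((1 + δ) / (1 - δ)) with hL
  have hδ1' : 0 < 1 - δ := by linarith
  have hpb : ∀ y, (1 - δ) * q y ≤ p y ∧ p y ≤ (1 + δ) * q y := by
    intro y
    have := abs_le.mp (hclose y)
    constructor <;> linarith [this.1, this.2]
  set A : Y → Z → ℝ := fun y z => p y * W y z with hAdef
  set B : Y → Z → ℝ := fun y z => q y * W y z with hBdef
  set SA : Z → ℝ := fun z => ∑ y', A y' z with hSAdef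
  set SB : Z → ℝ := fun z => ∑ y', B y' z with hSBdef
  have hA0 : ∀ y z, 0 ≤ A y z := fun y z => mul_nonneg (hp0 y) (hW0 y z)
  have hB0 : ∀ y z, 0 ≤ B y z := fun y z => mul_nonneg (hq0 y) (hW0 y z)
  have hAB_lb : ∀ y z, (1 - δ) * B y z ≤ A y z := by
    intro y z
    have := mul_le_mul_of_nonneg_right (hpb y).1 (hW0 y z)
    simpa [hAdef, hBdef, mul_assoc] using this
  have hAB_ub : ∀ y z, A y z ≤ (1 + δ) * B y z := by
    intro y z
    have := mul_le_mul_of_nonneg_right (hpb y).2 (hW0 y z)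
    simpa [hAdef, hBdef, mul_assoc] using this
  have hS_lb : ∀ z, (1 - δ) * SB z ≤ SA z := by
    intro z
    rw [hSAdef, hSBdef]
    simp only
    rw [Finset.mul_sum]
    exact Finset.sum_le_sum fun y _ => hAB_lb y z
  have hS_ub : ∀ z, SA z ≤ (1 + δ) * SB z := by
    intro z
    rw [hSAdef, hSBdef]
    simp only
    rw [Finset.mul_sum]
    exact Finset.sum_le_sum fun y _ => hAB_ub y z
  -- termwise bound
  have key : ∀ y z, |A y z * Real.log (A y z / SA z) - B y z * Real.log (B y z / SB z)| ≤
      L * A y z + δ * (-(B y z * Real.log (B y z / SB z))) := by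
    intro y z
    rcases (hB0 y z).lt_or_eq with hB | hB
    · -- B > 0
      have hApos : 0 < A y z := lt_of_lt_of_le (by nlinarith) (hAB_lb y z)
      have hSBpos : 0 < SB z :=
        lt_of_lt_of_le hB (Finset.single_le_sum (fun i _ => hB0 i z) (Finset.mem_univ y))
      have hSApos : 0 < SA z :=
        lt_of_lt_of_le hApos (Finset.single_le_sum (fun i _ => hA0 i z) (Finset.mem_univ y))
      -- bound on |log(A/SA) - log(B/SB)|
      have hΔ : |Real.log (A y z / SA z) - Real.log (B y z / SB z)| ≤ L := by
        rw [Real.log_div (ne_of_gt hApos) (ne_of_gt hSApos),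
            Real.log_div (ne_of_gt hB) (ne_of_gt hSBpos)]
        have h1 : Real.log (A y z) - Real.log (B y z) ≤ Real.log (1 + δ) := by
          rw [← Real.log_div (ne_of_gt hApos) (ne_of_gt hB)]
          apply Real.log_le_log (by positivity)
          rw [div_le_iff₀ hB]
          linarith [hAB_ub y z]
        have h2 : Real.log (1 - δ) ≤ Real.log (A y z) - Real.log (B y z) := by
          rw [← Real.log_div (ne_of_gt hApos) (ne_of_gt hB)]
          apply Real.log_le_log (by positivity)
          rw [le_div_iff₀ hB]
          linarith [hAB_lb y z]
        have h3 : Real.log (SA z) - Real.log (SB z) ≤ Real.log (1 + δ) := by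
          rw [← Real.log_div (ne_of_gt hSApos) (ne_of_gt hSBpos)]
          apply Real.log_le_log (by positivity)
          rw [div_le_iff₀ hSBpos]
          linarith [hS_ub z]
        have h4 : Real.log (1 - δ) ≤ Real.log (SA z) - Real.log (SB z) := by
          rw [← Real.log_div (ne_of_gt hSApos) (ne_of_gt hSBpos)]
          apply Real.log_le_log (by positivity)
          rw [le_div_iff₀ hSBpos]
          linarith [hS_lb z]
        have hLeq : L = Real.log (1 + δ) - Real.log (1 - δ) := by
          rw [hL, Real.log_div (by linarith) (ne_of_gt hδ1')]
        rw [abs_le]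
        constructor <;> [linarith; linarith]
      have hABd : |A y z - B y z| ≤ δ * B y z := by
        have := mul_le_mul_of_nonneg_right (hclose y) (hW0 y z)
        calc |A y z - B y z| = |p y - q y| * W y z := by
              rw [hAdef, hBdef]; simp only
              rw [← sub_mul, abs_mul, abs_of_nonneg (hW0 y z)]
          _ ≤ δ * q y * W y z := this
          _ = δ * B y z := by rw [hBdef]; ring
      have hlogB : Real.log (B y z / SB z) ≤ 0 := by
        apply Real.log_nonpos (by positivity)
        rw [div_le_one hSBpos]
        exact Finset.single_le_sum (fun i _ => hB0 i z) (Finset.mem_univ y)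
      calc |A y z * Real.log (A y z / SA z) - B y z * Real.log (B y z / SB z)|
          = |A y z * (Real.log (A y z / SA z) - Real.log (B y z / SB z))
              + (A y z - B y z) * Real.log (B y z / SB z)| := by ring_nf
        _ ≤ |A y z * (Real.log (A y z / SA z) - Real.log (B y z / SB z))|
              + |(A y z - B y z) * Real.log (B y z / SB z)| := abs_add_le _ _
        _ ≤ A y z * L + (δ * B y z) * (-Real.log (B y z / SB z)) := by
            apply add_le_add
            · rw [abs_mul, abs_of_pos hApos]
              exact mul_le_mul_of_nonneg_left hΔ hApos.le
            · rw [abs_mul, abs_of_nonpos hlogB]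
              apply mul_le_mul hABd le_rfl (by linarith) (by positivity)
        _ = L * A y z + δ * (-(B y z * Real.log (B y z / SB z))) := by ring
    · -- B = 0
      have hA_eq : A y z = 0 := by
        rcases mul_eq_zero.mp hB.symm with h | h
        · have h1 := hclose y
          rw [h] at h1
          have : p y = 0 := by
            have := abs_le.mp h1
            have h2 := hp0 y
            simp at this
            linarith [this.2]
          rw [hAdef]; simp [this]
        · rw [hAdef]; simp [h]
      rw [hA_eq, ← hB]
      simp
  -- sum up
  have hAtot : ∑ y, ∑ z, A y z = 1 := by
    calc ∑ y, ∑ z, A y z = ∑ y, p y * ∑ z, W y z := by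
          apply Finset.sum_congr rfl; intro y _; rw [Finset.mul_sum]
      _ = 1 := by
          rw [← hp1]; apply Finset.sum_congr rfl; intro y _; rw [hW1 y, mul_one]
  have hdiff : hYZ A - hYZ B =
      ∑ y, ∑ z, (B y z * Real.log (B y z / SB z) - A y z * Real.log (A y z / SA z)) := by
    simp only [hYZ, hSAdef, hSBdef, neg_sub_neg, ← Finset.sum_sub_distrib]
  have habs : |hYZ A - hYZ B| ≤
      ∑ y, ∑ z, (L * A y z + δ * (-(B y z * Real.log (B y z / SB z)))) := by
    rw [hdiff]
    calc |∑ y, ∑ z, (B y z * Real.log (B y z / SB z) - A y z * Real.log (A y z / SA z))|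
        ≤ ∑ y, ∑ z, |B y z * Real.log (B y z / SB z) - A y z * Real.log (A y z / SA z)| := by
          refine (Finset.abs_sum_le_sum_abs _ _).trans ?_
          apply Finset.sum_le_sum; intro y _
          exact Finset.abs_sum_le_sum_abs _ _
      _ ≤ ∑ y, ∑ z, (L * A y z + δ * (-(B y z * Real.log (B y z / SB z)))) := by
          apply Finset.sum_le_sum; intro y _
          apply Finset.sum_le_sum; intro z _
          rw [abs_sub_comm]
          exact key y z
  have hsum : ∑ y, ∑ z, (L * A y z + δ * (-(B y z * Real.log (B y z / SB z)))) =
      L + δ * hYZ B := by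
    simp only [hYZ, hSBdef, Finset.sum_add_distrib, Finset.sum_neg_distrib,
      ← Finset.mul_sum, mul_neg, hAtot, mul_one]
  rw [hsum] at habs
  have : δ * hYZ B ≤ δ * Real.log (Fintype.card Y) :=
    mul_le_mul_of_nonneg_left hB_le hδ0
  linarith

end EntRep

/-- **Lemma 8** (entropy replacement): there is a continuous function `ε : [0,1) → ℝ` with
`ε(0) = 0`, depending only on `|Y|`, such that for every joint pmf
`P_{XYZ} = P_X × P_{Y|X} × P_{Z|YX}`, every pmf `Q_Y`, every `δ ∈ [0,1)` and every set
`E ⊆ X` on which `P_{Y|X}(·|x)` is `δ`-close to `Q_Y` multiplicatively, replacing the `Y`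
component by an independent `Q_Y` variable (`P̃ = P_X × Q_Y × P_{Z|YX}`) changes the
conditional entropy `H(Y|Z,X)` by at most `(ε(δ) + 1 − P_X(E))·log |Y|`. -/
theorem entropy_replacement
    (Y : Type) [Fintype Y] [Nonempty Y] :
    ∃ ε : ℝ → ℝ, ContinuousOn ε (Set.Ico (0 : ℝ) 1) ∧ ε 0 = 0 ∧
      ∀ (X Z : Type) [Fintype X] [Fintype Z]
        (PX : X → ℝ) (PYX : X → Y → ℝ) (PZYX : X → Y → Z → ℝ),
        IsPMF PX → IsChannel PYX → (∀ x y, IsPMF (PZYX x y)) →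
        ∀ (QY : Y → ℝ), IsPMF QY →
        ∀ (δ : ℝ), 0 ≤ δ → δ < 1 →
        ∀ (E : Finset X),
        (∀ x ∈ E, ∀ y, |PYX x y - QY y| ≤ δ * QY y) →
        |condEntMid (fun p : X × Y × Z => PX p.1 * PYX p.1 p.2.1 * PZYX p.1 p.2.1 p.2.2) -
            condEntMid (fun p : X × Y × Z => PX p.1 * QY p.2.1 * PZYX p.1 p.2.1 p.2.2)|
          ≤ (ε δ + 1 - ∑ x ∈ E, PX x) * Real.log (Fintype.card Y) := by
  classical
  refine ⟨fun δ => δ + Real.log ((1 + δ) / (1 - δ)) / Real.log 2, ?_, by norm_num, ?_⟩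
  · -- continuity
    apply ContinuousOn.add continuousOn_id
    apply ContinuousOn.div_const
    apply ContinuousOn.log
    · apply ContinuousOn.div
      · fun_prop
      · fun_prop
      · intro x hx
        have : x < 1 := hx.2
        intro h; linarith [sub_eq_zero.mp h]
    · intro x hx
      have h1 : (0:ℝ) ≤ x := hx.1
      have h2 : x < 1 := hx.2
      exact ne_of_gt (div_pos (by linarith) (by linarith))
  intro X Z _ _ PX PYX PZYX hPX hPYX hPZYX QY hQY δ hδ0 hδ1 E hE
  set εδ := δ + Real.log ((1 + δ) / (1 - δ)) / Real.log 2 with hεδ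
  have hδ1' : (0:ℝ) < 1 - δ := by linarith
  have hL0 : 0 ≤ Real.log ((1 + δ) / (1 - δ)) := by
    apply Real.log_nonneg
    rw [le_div_iff₀ hδ1']
    linarith
  have hε0 : 0 ≤ εδ := by
    have h2 : (0:ℝ) < Real.log 2 := Real.log_pos (by norm_num)
    have h3 := div_nonneg hL0 h2.le
    rw [hεδ]; linarith
  rcases Nat.lt_or_ge (Fintype.card Y) 2 with hcard | hcard
  · -- |Y| = 1 : the two pmfs coincide
    have hcard1 : Fintype.card Y = 1 := by
      have := Fintype.card_pos (α := Y); omega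
    obtain ⟨a, ha⟩ := Fintype.card_eq_one_iff.mp hcard1
    have huniv : (Finset.univ : Finset Y) = {a} := by
      apply Finset.eq_singleton_iff_unique_mem.mpr
      exact ⟨Finset.mem_univ a, fun b _ => ha b⟩
    have hone : ∀ (f : Y → ℝ), IsPMF f → ∀ y, f y = 1 := by
      intro f hf y
      have := hf.2
      rw [huniv, Finset.sum_singleton] at this
      rw [ha y, this]
    have heq : (fun p : X × Y × Z => PX p.1 * PYX p.1 p.2.1 * PZYX p.1 p.2.1 p.2.2) =
        (fun p : X × Y × Z => PX p.1 * QY p.2.1 * PZYX p.1 p.2.1 p.2.2) := by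
      funext p
      rw [hone (PYX p.1) (hPYX p.1) p.2.1, hone QY hQY p.2.1]
    rw [heq, sub_self, abs_zero, hcard1]
    simp
  -- main case: |Y| ≥ 2
  have hcY : (2:ℝ) ≤ Fintype.card Y := by exact_mod_cast hcard
  have hlog2 : (0:ℝ) < Real.log 2 := Real.log_pos (by norm_num)
  set c := Real.log (Fintype.card Y) with hc
  have hc2 : Real.log 2 ≤ c := Real.log_le_log (by norm_num) hcY
  have hc0 : 0 ≤ c := le_trans hlog2.le hc2
  -- rewrite both condEntMid via decomposition
  have e1 : (fun p : X × Y × Z => PX p.1 * PYX p.1 p.2.1 * PZYX p.1 p.2.1 p.2.2) =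
      (fun p : X × Y × Z => PX p.1 * ((fun x y z => PYX x y * PZYX x y z) p.1 p.2.1 p.2.2)) := by
    funext p; ring
  have e2 : (fun p : X × Y × Z => PX p.1 * QY p.2.1 * PZYX p.1 p.2.1 p.2.2) =
      (fun p : X × Y × Z => PX p.1 * ((fun x y z => QY y * PZYX x y z) p.1 p.2.1 p.2.2)) := by
    funext p; ring
  have d1 : condEntMid (fun p : X × Y × Z => PX p.1 * PYX p.1 p.2.1 * PZYX p.1 p.2.1 p.2.2)
      = ∑ x, PX x * EntRep.hYZ (fun y z => PYX x y * PZYX x y z) := by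
    rw [e1]; exact EntRep.condEntMid_eq PX (fun x y z => PYX x y * PZYX x y z)
  have d2 : condEntMid (fun p : X × Y × Z => PX p.1 * QY p.2.1 * PZYX p.1 p.2.1 p.2.2)
      = ∑ x, PX x * EntRep.hYZ (fun y z => QY y * PZYX x y z) := by
    rw [e2]; exact EntRep.condEntMid_eq PX (fun x y z => QY y * PZYX x y z)
  rw [d1, d2]
  set hA : X → ℝ := fun x => EntRep.hYZ (fun y z => PYX x y * PZYX x y z) with hhA
  set hB : X → ℝ := fun x => EntRep.hYZ (fun y z => QY y * PZYX x y z) with hhB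
  -- basic per-x facts
  have hBpmf : ∀ x : X, ∑ y, ∑ z, QY y * PZYX x y z = 1 := by
    intro x
    calc ∑ y, ∑ z, QY y * PZYX x y z = ∑ y, QY y * ∑ z, PZYX x y z := by
          apply Finset.sum_congr rfl; intro y _; rw [Finset.mul_sum]
      _ = 1 := by
          rw [← hQY.2]; apply Finset.sum_congr rfl; intro y _; rw [(hPZYX x y).2, mul_one]
  have hApmf : ∀ x : X, ∑ y, ∑ z, PYX x y * PZYX x y z = 1 := by
    intro x
    calc ∑ y, ∑ z, PYX x y * PZYX x y z = ∑ y, PYX x y * ∑ z, PZYX x y z := by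
          apply Finset.sum_congr rfl; intro y _; rw [Finset.mul_sum]
      _ = 1 := by
          rw [← (hPYX x).2]; apply Finset.sum_congr rfl; intro y _
          rw [(hPZYX x y).2, mul_one]
  have hA_nonneg : ∀ x, 0 ≤ hA x := fun x =>
    EntRep.hYZ_nonneg _ (fun y z => mul_nonneg ((hPYX x).1 y) ((hPZYX x y).1 z))
  have hB_nonneg : ∀ x, 0 ≤ hB x := fun x =>
    EntRep.hYZ_nonneg _ (fun y z => mul_nonneg (hQY.1 y) ((hPZYX x y).1 z))
  have hA_le : ∀ x, hA x ≤ c := fun x =>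
    EntRep.hYZ_le _ (fun y z => mul_nonneg ((hPYX x).1 y) ((hPZYX x y).1 z)) (hApmf x)
  have hB_le : ∀ x, hB x ≤ c := fun x =>
    EntRep.hYZ_le _ (fun y z => mul_nonneg (hQY.1 y) ((hPZYX x y).1 z)) (hBpmf x)
  have hbound_all : ∀ x, |hA x - hB x| ≤ c := by
    intro x
    rw [abs_le]
    constructor <;> [linarith [hA_nonneg x, hB_le x]; linarith [hB_nonneg x, hA_le x]]
  have hbound_E : ∀ x ∈ E, |hA x - hB x| ≤ εδ * c := by
    intro x hx
    have hcomp := EntRep.compare (PYX x) QY (PZYX x)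
      ((hPYX x).1) ((hPYX x).2) (hQY.1)
      (fun y z => (hPZYX x y).1 z) (fun y => (hPZYX x y).2)
      (hBpmf x) δ hδ0 hδ1 (hE x hx) (hB_le x)
    refine hcomp.trans ?_
    have h1 : Real.log ((1 + δ) / (1 - δ)) ≤
        Real.log ((1 + δ) / (1 - δ)) / Real.log 2 * c := by
      calc Real.log ((1 + δ) / (1 - δ))
          = Real.log ((1 + δ) / (1 - δ)) / Real.log 2 * Real.log 2 := by
            field_simp
        _ ≤ Real.log ((1 + δ) / (1 - δ)) / Real.log 2 * c := by
            apply mul_le_mul_of_nonneg_left hc2 (div_nonneg hL0 hlog2.le)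
    have h2 : εδ * c = δ * c + Real.log ((1 + δ) / (1 - δ)) / Real.log 2 * c := by
      rw [hεδ]; ring
    rw [h2]
    linarith
  -- sum everything
  have hPE : ∑ x ∈ E, PX x ≤ 1 := by
    rw [← hPX.2]
    exact Finset.sum_le_sum_of_subset_of_nonneg (Finset.subset_univ E)
      (fun x _ _ => hPX.1 x)
  have hsplit : ∑ x ∈ E, PX x + ∑ x ∈ Eᶜ, PX x = 1 := by
    rw [Finset.sum_add_sum_compl]; exact hPX.2
  calc |∑ x, PX x * hA x - ∑ x, PX x * hB x|
      = |∑ x, PX x * (hA x - hB x)| := by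
        congr 1
        rw [← Finset.sum_sub_distrib]
        apply Finset.sum_congr rfl; intro x _; ring
    _ ≤ ∑ x, PX x * |hA x - hB x| := by
        refine (Finset.abs_sum_le_sum_abs _ _).trans ?_
        apply Finset.sum_le_sum; intro x _
        rw [abs_mul, abs_of_nonneg (hPX.1 x)]
    _ = ∑ x ∈ E, PX x * |hA x - hB x| + ∑ x ∈ Eᶜ, PX x * |hA x - hB x| := by
        rw [Finset.sum_add_sum_compl]
    _ ≤ ∑ x ∈ E, PX x * (εδ * c) + ∑ x ∈ Eᶜ, PX x * c := by
        apply add_le_add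
        · apply Finset.sum_le_sum; intro x hx
          exact mul_le_mul_of_nonneg_left (hbound_E x hx) (hPX.1 x)
        · apply Finset.sum_le_sum; intro x _
          exact mul_le_mul_of_nonneg_left (hbound_all x) (hPX.1 x)
    _ = (∑ x ∈ E, PX x) * (εδ * c) + (∑ x ∈ Eᶜ, PX x) * c := by
        rw [← Finset.sum_mul, ← Finset.sum_mul]
    _ ≤ 1 * (εδ * c) + (1 - ∑ x ∈ E, PX x) * c := by
        apply add_le_add
        · exact mul_le_mul_of_nonneg_right hPE (by positivity)
        · apply le_of_eq; congr 1; linarith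
    _ = (εδ + 1 - ∑ x ∈ E, PX x) * c := by ring


end
end
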